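/- arXiv:2401.06668 — 2 statements merged into one kernel-verified Lean document; each statement's English description precedes it below -/
import Mathlib

section
/- Define σ: the space of finite point measures φ on S × ℕ → [0,∞) recursively by σ(δ_{(x,m)}) = 1 and σ(φ) = Σ over pairs (y, y') in the support of φ of ∫_S K_φ(y, y', dz) · σ(φ − δ_y − δ_{y'} + δ_{(z, m(y)+m(y'))}). If the coagulation kernel K satisfies ⟨v, K w⟩ ≤ H ‖v‖₁ ‖w‖₁ for all finite measures v, w on S × ℕ (where ‖v‖₁ = Σ_m ∫ m v(dx, m)), then σ(φ) ≤ H^{|φ|−1} · ‖φ‖₁^{2(|φ|−1)} for all nonzero finite point measures φ, where |φ| denotes the total number of atoms of φ. -/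
open MeasureTheory Finsupp
open scoped Classical

section AuxSigma

variable {S : Type*}

private lemma sigma_count_add (φ ψ : (S × ℕ) →₀ ℕ) :
    (φ + ψ).sum (fun _ k => k) = φ.sum (fun _ k => k) + ψ.sum (fun _ k => k) :=
  Finsupp.sum_add_index' (fun _ => rfl) (fun _ _ _ => rfl)

private lemma sigma_mass_add (φ ψ : (S × ℕ) →₀ ℕ) :
    (φ + ψ).sum (fun y k => (k : ℝ) * (y.2 : ℝ))
      = φ.sum (fun y k => (k : ℝ) * (y.2 : ℝ)) + ψ.sum (fun y k => (k : ℝ) * (y.2 : ℝ)) :=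
  Finsupp.sum_add_index' (by simp) (by intro a b c; push_cast; ring)

private lemma sigma_count_single (y : S × ℕ) :
    (Finsupp.single y 1).sum (fun _ k => k) = 1 :=
  Finsupp.sum_single_index rfl

private lemma sigma_mass_single (y : S × ℕ) :
    (Finsupp.single y 1 : (S × ℕ) →₀ ℕ).sum (fun y k => (k : ℝ) * (y.2 : ℝ)) = (y.2 : ℝ) := by
  rw [Finsupp.sum_single_index (by simp)]; simp

end AuxSigma

/-- Bound on the recursively defined total coagulation weight `σ`.

A finite point configuration on `S × ℕ` is a finitely supported function
`φ : (S × ℕ) →₀ ℕ` (multiplicities of particles at location/mass pairs); its number of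
particles is `|φ| = ∑ φ(y)` and its total mass is `‖φ‖₁ = ∑ φ(y)·m(y)`.
Given a coagulation kernel `K` and a placement (Markov) kernel `Υ`, `σ` is determined by
`σ(δ_y) = 1` and the recursion
`σ(φ) = ∑_{y,y'} K_φ(y,y') ∫ σ(φ - δ_y - δ_{y'} + δ_{(z, m+m')}) Υ(y,y',dz)`,
where `K_φ` carries the pair-counting factor `φ(y)φ(y')` resp. `φ(y)(φ(y)-1)/2`.
If `⟨v, K w⟩ ≤ H·‖v‖₁·‖w‖₁`, then `σ(φ) ≤ H^{|φ|-1}·‖φ‖₁^{2(|φ|-1)}` for `φ ≠ 0`. -/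
theorem sigma_recursion_bound {S : Type*} [MeasurableSpace S]
    (K : (S × ℕ) → (S × ℕ) → ℝ) (hKpos : ∀ y y', 0 ≤ K y y')
    (hKsymm : ∀ y y', K y y' = K y' y)
    (Υ : (S × ℕ) → (S × ℕ) → Measure S)
    (hΥ : ∀ y y', IsProbabilityMeasure (Υ y y'))
    (H : ℝ)
    (hH : ∀ v w : (S × ℕ) →₀ ℝ, (∀ y, 0 ≤ v y) → (∀ y, 0 ≤ w y) →
      (v.sum fun y a => w.sum fun y' b => a * b * K y y')
        ≤ H * (v.sum fun y a => a * (y.2 : ℝ)) * (w.sum fun y' b => b * (y'.2 : ℝ)))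
    (σ : ((S × ℕ) →₀ ℕ) → ℝ)
    (hσ1 : ∀ y : S × ℕ, σ (Finsupp.single y 1) = 1)
    (hσrec : ∀ φ : (S × ℕ) →₀ ℕ, 2 ≤ φ.sum (fun _ k => k) →
      σ φ = ∑ y ∈ φ.support, ∑ y' ∈ φ.support,
        (if y = y' then ((φ y : ℝ) * ((φ y : ℝ) - 1)) / 2 else (φ y : ℝ) * (φ y' : ℝ))
          * K y y'
          * ∫ z, σ (φ - Finsupp.single y 1 - Finsupp.single y' 1
              + Finsupp.single ((z, y.2 + y'.2) : S × ℕ) 1) ∂(Υ y y'))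
    (φ : (S × ℕ) →₀ ℕ) (hφ : φ ≠ 0) :
    σ φ ≤ H ^ (φ.sum (fun _ k => k) - 1)
        * (φ.sum fun y k => (k : ℝ) * (y.2 : ℝ)) ^ (2 * (φ.sum (fun _ k => k) - 1)) := by
  classical
  -- nonnegativity of H
  obtain ⟨y0, hy0⟩ := Finsupp.support_nonempty_iff.mpr hφ
  have hH0 : 0 ≤ H := by
    have hvpos : ∀ y : S × ℕ, (0:ℝ) ≤ Finsupp.single ((y0.1, 1) : S × ℕ) (1:ℝ) y := by
      intro y
      rw [Finsupp.single_apply]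
      split <;> norm_num
    have h := hH (Finsupp.single ((y0.1, 1) : S × ℕ) (1:ℝ))
      (Finsupp.single ((y0.1, 1) : S × ℕ) (1:ℝ)) hvpos hvpos
    rw [Finsupp.sum_single_index (by simp), Finsupp.sum_single_index (by simp),
      Finsupp.sum_single_index (by simp)] at h
    simp at h
    nlinarith [hKpos ((y0.1, 1) : S × ℕ) ((y0.1, 1) : S × ℕ)]
  -- mass nonneg
  have hmass0 : ∀ ψ : (S × ℕ) →₀ ℕ, 0 ≤ ψ.sum fun y k => (k : ℝ) * (y.2 : ℝ) := by
    intro ψ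
    apply Finset.sum_nonneg
    intro y _
    positivity
  suffices h : ∀ n (ψ : (S × ℕ) →₀ ℕ), ψ ≠ 0 → ψ.sum (fun _ k => k) = n →
      σ ψ ≤ H ^ (n - 1) * (ψ.sum fun y k => (k : ℝ) * (y.2 : ℝ)) ^ (2 * (n - 1)) from
    h _ φ hφ rfl
  intro n
  induction n using Nat.strong_induction_on with
  | _ n ih =>
  intro ψ hψ0 hn
  match n, hn with
  | 0, hn =>
    exfalso
    apply hψ0
    have h0 : ∀ y ∈ ψ.support, ψ y = 0 := Finset.sum_eq_zero_iff.mp hn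
    ext y
    by_cases hy : y ∈ ψ.support
    · exact h0 y hy
    · simpa using Finsupp.notMem_support_iff.mp hy
  | 1, hn =>
    obtain ⟨y, hy⟩ := Finsupp.support_nonempty_iff.mpr hψ0
    have hy1 : 1 ≤ ψ y := Nat.one_le_iff_ne_zero.mpr (Finsupp.mem_support_iff.mp hy)
    have hψeq : ψ = Finsupp.single y 1 := by
      ext y'
      rcases eq_or_ne y' y with rfl | hne
      · have : ψ y' ≤ 1 := hn ▸ Finset.single_le_sum (f := fun a => ψ a)
          (fun _ _ => Nat.zero_le _) hy
        simp [Finsupp.single_apply]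
        omega
      · rw [Finsupp.single_apply, if_neg (Ne.symm hne)]
        by_contra hne0
        have hy' : y' ∈ ψ.support := Finsupp.mem_support_iff.mpr hne0
        have hsub : ({y, y'} : Finset (S × ℕ)) ⊆ ψ.support := by
          intro a ha
          simp at ha
          rcases ha with rfl | rfl <;> assumption
        have h2 : ψ y + ψ y' ≤ ψ.sum (fun _ k => k) := by
          rw [show ψ y + ψ y' = ∑ a ∈ ({y, y'} : Finset (S × ℕ)), ψ a from
            (Finset.sum_pair (Ne.symm hne)).symm]
          exact Finset.sum_le_sum_of_subset hsub
        omega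
    rw [hψeq, hσ1]
    norm_num
  | (k+2), hn =>
    set M : ℝ := ψ.sum fun y k => (k : ℝ) * (y.2 : ℝ) with hM
    have hM0 : 0 ≤ M := hmass0 ψ
    set C : ℝ := H ^ k * M ^ (2 * k) with hC
    have hC0 : 0 ≤ C := by positivity
    rw [hσrec ψ (by omega)]
    -- key term bound
    have key : ∀ y ∈ ψ.support, ∀ y' ∈ ψ.support,
        (if y = y' then ((ψ y : ℝ) * ((ψ y : ℝ) - 1)) / 2 else (ψ y : ℝ) * (ψ y' : ℝ))
          * K y y'
          * ∫ z, σ (ψ - Finsupp.single y 1 - Finsupp.single y' 1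
              + Finsupp.single ((z, y.2 + y'.2) : S × ℕ) 1) ∂(Υ y y')
        ≤ (if y = y' then ((ψ y : ℝ) * ((ψ y : ℝ) - 1)) / 2 else (ψ y : ℝ) * (ψ y' : ℝ))
          * K y y' * C := by
      intro y hy y' hy'
      have hy1 : 1 ≤ ψ y := Nat.one_le_iff_ne_zero.mpr (Finsupp.mem_support_iff.mp hy)
      have hy'1 : 1 ≤ ψ y' := Nat.one_le_iff_ne_zero.mpr (Finsupp.mem_support_iff.mp hy')
      set c : ℝ := if y = y' then ((ψ y : ℝ) * ((ψ y : ℝ) - 1)) / 2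
        else (ψ y : ℝ) * (ψ y' : ℝ) with hc
      have hc0 : 0 ≤ c := by
        rw [hc]
        split
        · have h1 : (1:ℝ) ≤ (ψ y : ℝ) := by exact_mod_cast hy1
          nlinarith
        · positivity
      rcases (mul_nonneg hc0 (hKpos y y')).eq_or_lt with h0 | hpos
      · rw [← h0, zero_mul, zero_mul]
      · have hcpos : 0 < c := by
          rcases hc0.eq_or_lt with h | h
          · exfalso; rw [← h, zero_mul] at hpos; exact lt_irrefl _ hpos
          · exact h
        -- when y = y', ψ y must be at least 2
        have hyy2 : y = y' → 2 ≤ ψ y := by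
          intro e
          by_contra h2
          have : ψ y = 1 := by omega
          rw [hc, if_pos e, this] at hcpos
          norm_num at hcpos
        have hle1 : Finsupp.single y 1 ≤ ψ := Finsupp.single_le_iff.mpr hy1
        have hle2 : Finsupp.single y' 1 ≤ ψ - Finsupp.single y 1 := by
          apply Finsupp.single_le_iff.mpr
          rw [Finsupp.tsub_apply]
          rcases eq_or_ne y y' with e | e
          · subst e
            have := hyy2 rfl
            simp [Finsupp.single_apply]
            omega
          · rw [Finsupp.single_apply, if_neg e]
            omega
        set ψ₂ : (S × ℕ) →₀ ℕ := ψ - Finsupp.single y 1 - Finsupp.single y' 1 with hψ₂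
        have e2 : ψ₂ + Finsupp.single y' 1 = ψ - Finsupp.single y 1 :=
          tsub_add_cancel_of_le hle2
        have e1 : (ψ - Finsupp.single y 1) + Finsupp.single y 1 = ψ :=
          tsub_add_cancel_of_le hle1
        have hcnt2 : ψ₂.sum (fun _ k => k) + 2 = k + 2 := by
          have a1 := sigma_count_add (ψ - Finsupp.single y 1) (Finsupp.single y 1)
          rw [e1, hn, sigma_count_single] at a1
          have a2 := sigma_count_add ψ₂ (Finsupp.single y' 1)
          rw [e2, sigma_count_single] at a2
          omega
        have hmass2 : ψ₂.sum (fun y k => (k : ℝ) * (y.2 : ℝ)) + ((y.2 : ℝ) + (y'.2 : ℝ)) = M := by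
          have a1 := sigma_mass_add (ψ - Finsupp.single y 1) (Finsupp.single y 1)
          rw [e1, sigma_mass_single] at a1
          have a2 := sigma_mass_add ψ₂ (Finsupp.single y' 1)
          rw [e2, sigma_mass_single] at a2
          rw [hM]
          rw [a1, a2]
          ring
        have hchild : ∀ z : S,
            σ (ψ₂ + Finsupp.single ((z, y.2 + y'.2) : S × ℕ) 1) ≤ C := by
          intro z
          set χ : (S × ℕ) →₀ ℕ := ψ₂ + Finsupp.single ((z, y.2 + y'.2) : S × ℕ) 1 with hχ
          have hχc : χ.sum (fun _ k => k) = k + 1 := by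
            rw [hχ, sigma_count_add, sigma_count_single]
            omega
          have hχ0 : χ ≠ 0 := by
            intro h
            rw [h] at hχc
            simp [Finsupp.sum_zero_index] at hχc
          have hχm : χ.sum (fun y k => (k : ℝ) * (y.2 : ℝ)) = M := by
            rw [hχ, sigma_mass_add, sigma_mass_single]
            push_cast
            linarith [hmass2]
          have := ih (k+1) (by omega) χ hχ0 hχc
          rw [hχm] at this
          simpa using this
        have hint : (∫ z, σ (ψ - Finsupp.single y 1 - Finsupp.single y' 1
            + Finsupp.single ((z, y.2 + y'.2) : S × ℕ) 1) ∂(Υ y y')) ≤ C := by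
          have hP := hΥ y y'
          by_cases hi : Integrable (fun z => σ (ψ₂
              + Finsupp.single ((z, y.2 + y'.2) : S × ℕ) 1)) (Υ y y')
          · calc (∫ z, σ (ψ₂ + Finsupp.single ((z, y.2 + y'.2) : S × ℕ) 1) ∂(Υ y y'))
                ≤ ∫ _, C ∂(Υ y y') := integral_mono hi (integrable_const C) hchild
              _ = C := by simp
          · rw [show (fun z => σ (ψ - Finsupp.single y 1 - Finsupp.single y' 1
                + Finsupp.single ((z, y.2 + y'.2) : S × ℕ) 1))
                = fun z => σ (ψ₂ + Finsupp.single ((z, y.2 + y'.2) : S × ℕ) 1) from rfl]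
            rw [MeasureTheory.integral_undef hi]
            exact hC0
        exact mul_le_mul_of_nonneg_left hint (mul_nonneg hc0 (hKpos y y'))
    -- quadratic form bound
    have hquad : (∑ y ∈ ψ.support, ∑ y' ∈ ψ.support, (ψ y : ℝ) * (ψ y' : ℝ) * K y y')
        ≤ H * M * M := by
      set v : (S × ℕ) →₀ ℝ := ψ.mapRange (Nat.cast : ℕ → ℝ) Nat.cast_zero with hv
      have hvpos : ∀ y, 0 ≤ v y := by
        intro y
        rw [hv, Finsupp.mapRange_apply]
        positivity
      have hsum : ∀ (f : (S × ℕ) → ℝ → ℝ), (∀ y, f y 0 = 0) →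
          v.sum f = ∑ y ∈ ψ.support, f y ((ψ y : ℝ)) := by
        intro f hf
        rw [hv, Finsupp.sum_mapRange_index (by simpa using hf)]
        rfl
      have h2 : ∀ y : S × ℕ, (v.sum fun y' b => (ψ y : ℝ) * b * K y y')
          = ∑ y' ∈ ψ.support, (ψ y : ℝ) * (ψ y' : ℝ) * K y y' :=
        fun y => hsum (fun y' b => (ψ y : ℝ) * b * K y y') (fun y' => by ring)
      have h1 : (v.sum fun y a => v.sum fun y' b => a * b * K y y')
          = ∑ y ∈ ψ.support, v.sum fun y' b => (ψ y : ℝ) * b * K y y' :=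
        hsum (fun y a => v.sum fun y' b => a * b * K y y')
          (fun y => Finset.sum_eq_zero fun y' _ => by ring)
      have hMr : (v.sum fun y a => a * (y.2 : ℝ)) = M :=
        (hsum (fun y a => a * (y.2 : ℝ)) (fun y => by ring)).trans (by rw [hM, Finsupp.sum])
      calc (∑ y ∈ ψ.support, ∑ y' ∈ ψ.support, (ψ y : ℝ) * (ψ y' : ℝ) * K y y')
          = (v.sum fun y a => v.sum fun y' b => a * b * K y y') := by
            rw [h1]
            exact Finset.sum_congr rfl fun y _ => (h2 y).symm
        _ ≤ H * (v.sum fun y a => a * (y.2 : ℝ)) * (v.sum fun y' b => b * (y'.2 : ℝ)) :=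
            hH v v hvpos hvpos
        _ = H * M * M := by rw [hMr]
    -- combine
    have hfinal : (∑ y ∈ ψ.support, ∑ y' ∈ ψ.support,
        (if y = y' then ((ψ y : ℝ) * ((ψ y : ℝ) - 1)) / 2 else (ψ y : ℝ) * (ψ y' : ℝ))
          * K y y' * C) ≤ H * M * M * C := by
      calc (∑ y ∈ ψ.support, ∑ y' ∈ ψ.support,
          (if y = y' then ((ψ y : ℝ) * ((ψ y : ℝ) - 1)) / 2 else (ψ y : ℝ) * (ψ y' : ℝ))
            * K y y' * C)
          ≤ ∑ y ∈ ψ.support, ∑ y' ∈ ψ.support, (ψ y : ℝ) * (ψ y' : ℝ) * K y y' * C := by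
            refine Finset.sum_le_sum fun y hy => Finset.sum_le_sum fun y' hy' => ?_
            have hy1 : 1 ≤ ψ y := Nat.one_le_iff_ne_zero.mpr (Finsupp.mem_support_iff.mp hy)
            have h1 : (1:ℝ) ≤ (ψ y : ℝ) := by exact_mod_cast hy1
            refine mul_le_mul_of_nonneg_right (mul_le_mul_of_nonneg_right ?_ (hKpos y y')) hC0
            split
            · rename_i e
              subst e
              nlinarith
            · exact le_rfl
        _ = (∑ y ∈ ψ.support, ∑ y' ∈ ψ.support, (ψ y : ℝ) * (ψ y' : ℝ) * K y y') * C := by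
            simp [Finset.sum_mul]
        _ ≤ H * M * M * C := mul_le_mul_of_nonneg_right hquad hC0
    calc (∑ y ∈ ψ.support, ∑ y' ∈ ψ.support,
        (if y = y' then ((ψ y : ℝ) * ((ψ y : ℝ) - 1)) / 2 else (ψ y : ℝ) * (ψ y' : ℝ))
          * K y y'
          * ∫ z, σ (ψ - Finsupp.single y 1 - Finsupp.single y' 1
              + Finsupp.single ((z, y.2 + y'.2) : S × ℕ) 1) ∂(Υ y y'))
        ≤ ∑ y ∈ ψ.support, ∑ y' ∈ ψ.support,
          (if y = y' then ((ψ y : ℝ) * ((ψ y : ℝ) - 1)) / 2 else (ψ y : ℝ) * (ψ y' : ℝ))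
            * K y y' * C :=
          Finset.sum_le_sum fun y hy => Finset.sum_le_sum fun y' hy' => key y hy y' hy'
      _ ≤ H * M * M * C := hfinal
      _ = H ^ (k + 2 - 1) * M ^ (2 * (k + 2 - 1)) := by
          rw [hC]
          rw [show k + 2 - 1 = k + 1 from rfl]
          rw [pow_succ, show 2 * (k+1) = 2*k + 2 from by ring, pow_add]
          ring
end

section
/- Let m be a finite measure on a measurable space X. The sublevel sets {ν : H(ν | m) ≤ C} of the relative entropy, for each real C, are compact in the weak topology on the space of finite measures on X: the family of densities {dν/dm : H(ν|m) ≤ C} is uniformly integrable in L¹(m), hence weakly sequentially compact. -/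
open MeasureTheory
open scoped Classical ENNReal

/-- The relative entropy `H(ν | m) = ∫ (g log g - g + 1) dm` with `g = dν/dm` when `ν ≪ m`,
and `+∞` otherwise, as a value in `ℝ≥0∞` (the integrand is nonnegative). -/
noncomputable def relEnt {X : Type*} [MeasurableSpace X] (ν m : Measure X) : ℝ≥0∞ :=
  if ν ≪ m then
    ∫⁻ x, ENNReal.ofReal
      ((ν.rnDeriv m x).toReal * Real.log (ν.rnDeriv m x).toReal
        - (ν.rnDeriv m x).toReal + 1) ∂m
  else ⊤

/-!
For finite measures `relEnt ν m` is the Kullback–Leibler divergence `klDiv ν m`. Since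
`t ≤ exp (K + 1) + klFun t / K`, every `ν` with `klDiv ν m ≤ c` satisfies
`ν A ≤ exp (K + 1) * m A + c / K`: the densities of the sublevel set are uniformly integrable.
Along an ultrafilter on the sublevel set, `ν A` therefore converges for every measurable `A`, and
the limit is finitely additive and uniformly absolutely continuous with respect to `m`, hence a
measure `μ`. Setwise convergence implies weak convergence, by approximating a bounded continuous
function uniformly by a step function on its level sets. Finally, `klDiv μ m` is the supremum over
finite measurable partitions of `∑ m (A i) * klFun (μ (A i) / m (A i))` (Jensen's inequality gives
one bound, approximating the density on its level sets the other), and each such sum is continuous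
under setwise convergence, so `klDiv μ m ≤ c`.
-/

open Set Filter Topology InformationTheory
open scoped Function

section

variable {X : Type*}

def levelSet (g : X → ℝ) (η : ℝ) (k : ℤ) : Set X := (fun x => ⌊g x / η⌋) ⁻¹' {k}

lemma pairwise_disjoint_levelSet (g : X → ℝ) (η : ℝ) : Pairwise (Disjoint on levelSet g η) :=
  pairwise_disjoint_fiber _

lemma mem_Icc_of_mem_levelSet {g : X → ℝ} {η : ℝ} (hη : 0 < η) {k : ℤ} {x : X}
    (hx : x ∈ levelSet g η k) : g x ∈ Icc (k * η) ((k + 1) * η) := by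
  obtain ⟨h1, h2⟩ := Int.floor_eq_iff.1 hx
  exact ⟨(le_div_iff₀ hη).1 h1, ((div_lt_iff₀ hη).1 h2).le⟩

lemma iUnion_levelSet_of_abs_le {g : X → ℝ} {B : ℝ} (hB : ∀ x, |g x| ≤ B) {η : ℝ} (hη : 0 < η) :
    ⋃ k ∈ Finset.Icc ⌊-B / η⌋ ⌊B / η⌋, levelSet g η k = univ := by
  refine eq_univ_of_forall fun x => mem_biUnion (x := ⌊g x / η⌋) (Finset.mem_Icc.2 ⟨?_, ?_⟩) rfl
  all_goals exact Int.floor_mono (div_le_div_of_nonneg_right (by linarith [abs_le.1 (hB x)]) hη.le)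

lemma tendsto_of_forall_approx {α : Type*} {F : Filter α} {Φ : α → ℝ} {L : ℝ}
    (h : ∀ ε > 0, ∃ (ψ : α → ℝ) (l : ℝ), Tendsto ψ F (𝓝 l) ∧ (∀ᶠ a in F, |Φ a - ψ a| ≤ ε) ∧
      |L - l| ≤ ε) :
    Tendsto Φ F (𝓝 L) := by
  refine Metric.tendsto_nhds.2 fun ε hε => ?_
  obtain ⟨ψ, l, hψ, hΦψ, hLl⟩ := h (ε / 3) (by positivity)
  filter_upwards [Metric.tendsto_nhds.1 hψ (ε / 3) (by positivity), hΦψ] with a hψa hΦa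
  rw [Real.dist_eq] at hψa ⊢
  have := abs_sub_le (Φ a) (ψ a) L
  have := abs_sub_le (ψ a) l L
  rw [abs_sub_comm l L] at this
  linarith

lemma le_exp_add_klFun_div {t K : ℝ} (ht : 0 ≤ t) (hK : 0 < K) :
    t ≤ Real.exp (K + 1) + klFun t / K := by
  rcases le_or_gt t (Real.exp (K + 1)) with h | h
  · linarith [div_nonneg (klFun_nonneg ht) hK.le]
  · have hlog : K + 1 ≤ Real.log t := by
      rw [Real.le_log_iff_exp_le (by linarith [Real.exp_pos (K + 1)])]; exact h.le
    have : t * K ≤ klFun t := by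
      rw [klFun_apply]; nlinarith [Real.exp_pos (K + 1)]
    linarith [(le_div_iff₀ hK).2 this, Real.exp_pos (K + 1)]

lemma exists_nat_forall_le_add_of_continuousOn {f : ℝ → ℝ} {R ε : ℝ}
    (hf : ContinuousOn f (Icc 0 R)) (hR : 0 < R) (hε : 0 < ε) :
    ∃ n : ℕ, 0 < n ∧ ∀ k : ℤ, 0 ≤ k → k < n →
      ∀ y ∈ Icc (k * (R / n)) ((k + 1) * (R / n)),
      ∀ z ∈ Icc (k * (R / n)) ((k + 1) * (R / n)), f y ≤ f z + ε := by
  obtain ⟨δ, hδ, hfδ⟩ := Metric.uniformContinuousOn_iff.1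
    (isCompact_Icc.uniformContinuousOn_of_continuous hf) ε hε
  obtain ⟨n, hn⟩ := exists_nat_gt (R / δ)
  have hn0 : (0 : ℝ) < n := (div_pos hR hδ).trans hn
  have hηδ : R / n < δ := by rw [div_lt_iff₀ hn0, mul_comm]; rwa [div_lt_iff₀ hδ] at hn
  refine ⟨n, by exact_mod_cast hn0, fun k hk0 hkn y hy z hz => ?_⟩
  have hIcc : Icc (k * (R / n)) ((k + 1) * (R / n)) ⊆ Icc 0 R := by
    refine Icc_subset_Icc (by positivity) ?_
    calc ((k : ℝ) + 1) * (R / n) ≤ n * (R / n) := by gcongr; exact_mod_cast hkn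
      _ = R := mul_div_cancel₀ R hn0.ne'
  have hdist : dist y z < δ := (Real.dist_le_of_mem_Icc hy hz).trans_lt (by linarith)
  have := hfδ y (hIcc hy) z (hIcc hz) hdist
  rw [Real.dist_eq, abs_lt] at this
  linarith

variable [MeasurableSpace X]

lemma measurableSet_levelSet {g : X → ℝ} (hg : Measurable g) (η : ℝ) (k : ℤ) :
    MeasurableSet (levelSet g η k) :=
  (hg.div_const η).floor (measurableSet_singleton k)

lemma isSetRing_measurableSet : IsSetRing {s : Set X | MeasurableSet s} :=
  ⟨.empty, fun _ _ => .union, fun _ _ => .diff⟩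

lemma relEnt_eq_klDiv (ν m : Measure X) [IsFiniteMeasure ν] [IsFiniteMeasure m] :
    relEnt ν m = klDiv ν m := by
  simp_rw [klDiv_eq_lintegral_klFun, relEnt, klFun, sub_add_eq_add_sub]

lemma absolutelyContinuous_of_klDiv_le {ν m : Measure X} {c : ℝ≥0∞} (hc : c ≠ ∞)
    (h : klDiv ν m ≤ c) : ν ≪ m :=
  (klDiv_ne_top_iff.1 (ne_top_of_le_ne_top hc h)).1

lemma measure_le_exp_mul_add_klDiv_div {ν m : Measure X} [IsFiniteMeasure ν] [IsFiniteMeasure m]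
    (hνm : ν ≪ m) {K : ℝ} (hK : 0 < K) (A : Set X) :
    ν A ≤ ENNReal.ofReal (Real.exp (K + 1)) * m A + klDiv ν m / ENNReal.ofReal K := by
  calc ν A = ∫⁻ x in A, ν.rnDeriv m x ∂m := (Measure.setLIntegral_rnDeriv hνm A).symm
    _ ≤ ∫⁻ x in A, ENNReal.ofReal (Real.exp (K + 1))
          + ENNReal.ofReal (klFun (ν.rnDeriv m x).toReal) / ENNReal.ofReal K ∂m := by
        refine lintegral_mono_ae ?_
        filter_upwards [ae_restrict_of_ae (Measure.rnDeriv_lt_top ν m)] with x hx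
        rw [← ENNReal.ofReal_toReal hx.ne, ← ENNReal.ofReal_div_of_pos hK,
          ← ENNReal.ofReal_add (Real.exp_pos _).le
            (div_nonneg (klFun_nonneg ENNReal.toReal_nonneg) hK.le), ENNReal.toReal_ofReal
            ENNReal.toReal_nonneg]
        exact ENNReal.ofReal_le_ofReal (le_exp_add_klFun_div ENNReal.toReal_nonneg hK)
    _ = ENNReal.ofReal (Real.exp (K + 1)) * m A
          + (∫⁻ x in A, ENNReal.ofReal (klFun (ν.rnDeriv m x).toReal) ∂m) / ENNReal.ofReal K := by
        simp_rw [div_eq_mul_inv]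
        rw [lintegral_add_left measurable_const, setLIntegral_const,
          lintegral_mul_const' _ _ (ENNReal.inv_ne_top.2 (ENNReal.ofReal_pos.2 hK).ne')]
    _ ≤ _ := by
        rw [klDiv_eq_lintegral_klFun_of_ac hνm]
        gcongr
        exact Measure.restrict_le_self

lemma measure_univ_le_of_klDiv_le {ν m : Measure X} [IsFiniteMeasure ν] [IsFiniteMeasure m]
    {c : ℝ≥0∞} (hc : c ≠ ∞) (h : klDiv ν m ≤ c) :
    ν univ ≤ ENNReal.ofReal (Real.exp 2) * m univ + c :=
  calc ν univ ≤ ENNReal.ofReal (Real.exp (1 + 1)) * m univ + klDiv ν m / ENNReal.ofReal 1 :=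
        measure_le_exp_mul_add_klDiv_div (absolutelyContinuous_of_klDiv_le hc h) one_pos univ
    _ ≤ _ := by rw [ENNReal.ofReal_one, div_one, one_add_one_eq_two]; gcongr

lemma exists_pos_forall_measure_le_of_klDiv_le (m : Measure X) [IsFiniteMeasure m] {c : ℝ≥0∞}
    (hc : c ≠ ∞) {ε : ℝ≥0∞} (hε : 0 < ε) :
    ∃ δ > 0, ∀ (ν : Measure X) [IsFiniteMeasure ν], klDiv ν m ≤ c → ∀ A, m A ≤ δ → ν A ≤ ε := by
  have hε2 : ε / 2 ≠ 0 := (ENNReal.half_pos hε.ne').ne'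
  obtain ⟨n, hn⟩ := ENNReal.exists_nat_gt (ENNReal.div_ne_top hc hε2)
  have hcn : c ≤ ε / 2 * n := by
    rw [ENNReal.div_lt_iff (Or.inl hε2) (Or.inr hc), mul_comm] at hn; exact hn.le
  have hn0 : (0 : ℝ) < n := by
    rcases Nat.eq_zero_or_pos n with rfl | h
    · simp at hn
    · exact_mod_cast h
  set e := ENNReal.ofReal (Real.exp (n + 1))
  have he : e ≠ 0 := (ENNReal.ofReal_pos.2 (Real.exp_pos _)).ne'
  refine ⟨ε / 2 / e, ENNReal.div_pos hε2 ENNReal.ofReal_ne_top, fun ν _ hν A hA => ?_⟩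
  calc ν A ≤ e * m A + klDiv ν m / ENNReal.ofReal n :=
        measure_le_exp_mul_add_klDiv_div (absolutelyContinuous_of_klDiv_le hc hν) hn0 A
    _ ≤ e * (ε / 2 / e) + ε / 2 := by
        refine add_le_add (by gcongr) ?_
        rw [ENNReal.ofReal_natCast]
        exact ENNReal.div_le_of_le_mul (hν.trans hcn)
    _ = ε := by rw [ENNReal.mul_div_cancel he ENNReal.ofReal_ne_top, ENNReal.add_halves]

theorem exists_measure_tendsto_of_uniformly_absolutelyContinuous {α : Type*} (F : Ultrafilter α)
    (ν : α → Measure X) (m : Measure X) [IsFiniteMeasure m] {M : ℝ≥0∞} (hM : M ≠ ∞)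
    (hmass : ∀ᶠ a in F, ν a univ ≤ M)
    (hunif : ∀ ε > 0, ∃ δ > 0, ∀ A, m A ≤ δ → ∀ᶠ a in F, ν a A ≤ ε) :
    ∃ μ : Measure X, IsFiniteMeasure μ ∧
      ∀ A, MeasurableSet A → Tendsto (fun a => ν a A) F (𝓝 (μ A)) := by
  -- `ℝ≥0∞` is compact, so every ultrafilter on it converges.
  choose L hL using fun A : Set X => (⟨_, (F.map fun a => ν a A).le_nhds_lim⟩ :
    ∃ l, Tendsto (fun a => ν a A) F (𝓝 l))
  have hL_le : ∀ A, L A ≤ M := fun A =>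
    le_of_tendsto (hL A) (hmass.mono fun a ha => (measure_mono (subset_univ A)).trans ha)
  have hL_small : ∀ ε > 0, ∃ δ > 0, ∀ A, m A ≤ δ → L A ≤ ε := fun ε hε =>
    (hunif ε hε).imp fun δ ⟨hδ, h⟩ => ⟨hδ, fun A hA => le_of_tendsto (hL A) (h A hA)⟩
  have hL_empty : L ∅ = 0 := tendsto_nhds_unique (hL ∅) (by simp)
  let content : AddContent ℝ≥0∞ {s : Set X | MeasurableSet s} :=
    isSetRing_measurableSet.addContent_of_union L hL_empty fun {s t} _ ht hst =>
      tendsto_nhds_unique (hL (s ∪ t)) <| by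
        simpa only [measure_union hst ht] using (hL s).add (hL t)
  have hL_iUnion : ∀ ⦃f : ℕ → Set X⦄, (∀ i, MeasurableSet (f i)) →
      Pairwise (Disjoint on f) → L (⋃ i, f i) = ∑' i, L (f i) := by
    refine fun f hf hd => addContent_iUnion_eq_sum_of_tendsto_zero (m := content)
      isSetRing_measurableSet (fun s _ => ne_top_of_le_ne_top hM (hL_le s)) ?_ hf
      (.iUnion hf) hd
    intro s hs hanti hempty
    have hms : Tendsto (m ∘ s) atTop (𝓝 0) := by
      simpa [hempty] using tendsto_measure_iInter_atTop (fun n => (hs n).nullMeasurableSet)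
        hanti ⟨0, measure_ne_top m _⟩
    refine ENNReal.tendsto_nhds_zero.2 fun ε hε => ?_
    obtain ⟨δ, hδ, h⟩ := hL_small ε hε
    exact (hms.eventually_le_const hδ).mono fun n hn => h _ hn
  let μ := Measure.ofMeasurable (fun A _ => L A) hL_empty hL_iUnion
  have hμ : ∀ A, MeasurableSet A → μ A = L A := fun A hA => Measure.ofMeasurable_apply A hA
  refine ⟨μ, ⟨?_⟩, fun A hA => hμ A hA ▸ hL A⟩
  rw [hμ _ .univ]
  exact (hL_le _).trans_lt hM.lt_top

noncomputable def partitionEntropy {ι : Type*} (μ m : Measure X) (s : Finset ι) (A : ι → Set X) :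
    ℝ :=
  ∑ i ∈ s, m.real (A i) * klFun (μ.real (A i) / m.real (A i))

lemma tendsto_partitionEntropy {α ι : Type*} {F : Filter α} {ν : α → Measure X}
    {μ m : Measure X} {s : Finset ι} {A : ι → Set X}
    (h : ∀ i ∈ s, Tendsto (fun a => (ν a).real (A i)) F (𝓝 (μ.real (A i)))) :
    Tendsto (fun a => partitionEntropy (ν a) m s A) F (𝓝 (partitionEntropy μ m s A)) :=
  tendsto_finsetSum _ fun i hi =>
    ((continuous_klFun.tendsto _).comp ((h i hi).div_const _)).const_mul _

section Density

variable {μ m : Measure X} [IsFiniteMeasure μ] [IsFiniteMeasure m]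

lemma setAverage_toReal_rnDeriv (hμm : μ ≪ m) (A : Set X) :
    ⨍ x in A, (μ.rnDeriv m x).toReal ∂m = μ.real A / m.real A := by
  rw [setAverage_eq, Measure.setIntegral_toReal_rnDeriv hμm, smul_eq_mul, div_eq_inv_mul]

lemma measureReal_mul_klFun_le_setIntegral (hμm : μ ≪ m)
    (hint : Integrable (fun x => klFun (μ.rnDeriv m x).toReal) m) (A : Set X) :
    m.real A * klFun (μ.real A / m.real A) ≤ ∫ x in A, klFun (μ.rnDeriv m x).toReal ∂m := by
  by_cases h0 : m A = 0
  · rw [measureReal_def, h0, ENNReal.toReal_zero, zero_mul]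
    exact integral_nonneg fun x => klFun_nonneg ENNReal.toReal_nonneg
  rw [← setAverage_toReal_rnDeriv hμm, ← measure_smul_setAverage _ (measure_ne_top m A),
    smul_eq_mul]
  gcongr
  exact convexOn_klFun.map_set_average_le continuous_klFun.continuousOn isClosed_Ici h0
    (measure_ne_top m A) (ae_of_all _ fun x => ENNReal.toReal_nonneg)
    Measure.integrable_toReal_rnDeriv.integrableOn hint.integrableOn

lemma partitionEntropy_le_toReal_klDiv (hμm : μ ≪ m) (hfin : klDiv μ m ≠ ∞) {ι : Type*}
    {s : Finset ι} {A : ι → Set X} (hA : ∀ i ∈ s, MeasurableSet (A i))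
    (hd : (s : Set ι).PairwiseDisjoint A) :
    partitionEntropy μ m s A ≤ (klDiv μ m).toReal := by
  have hint : Integrable (fun x => klFun (μ.rnDeriv m x).toReal) m :=
    (integrable_klFun_rnDeriv_iff hμm).2 (klDiv_ne_top_iff.1 hfin).2
  calc partitionEntropy μ m s A
      ≤ ∑ i ∈ s, ∫ x in A i, klFun (μ.rnDeriv m x).toReal ∂m :=
        Finset.sum_le_sum fun i _ => measureReal_mul_klFun_le_setIntegral hμm hint (A i)
    _ = ∫ x in ⋃ i ∈ s, A i, klFun (μ.rnDeriv m x).toReal ∂m :=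
        (integral_biUnion_finset s hA hd fun i _ => hint.integrableOn).symm
    _ ≤ ∫ x, klFun (μ.rnDeriv m x).toReal ∂m :=
        setIntegral_le_integral hint (ae_of_all _ fun x => klFun_nonneg ENNReal.toReal_nonneg)
    _ = (klDiv μ m).toReal := (toReal_klDiv_eq_integral_klFun hμm).symm

lemma setLIntegral_klFun_le_of_forall_mem_Icc (hμm : μ ≪ m) {A : Set X} (hA : MeasurableSet A)
    {a b ε : ℝ} (hg : ∀ x ∈ A, (μ.rnDeriv m x).toReal ∈ Icc a b)
    (hosc : ∀ s ∈ Icc a b, ∀ t ∈ Icc a b, klFun s ≤ klFun t + ε) :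
    ∫⁻ x in A, ENNReal.ofReal (klFun (μ.rnDeriv m x).toReal) ∂m
      ≤ ENNReal.ofReal (m.real A * (klFun (μ.real A / m.real A) + ε)) := by
  by_cases h0 : m A = 0
  · rw [setLIntegral_measure_zero _ _ h0]; exact zero_le
  have havg : μ.real A / m.real A ∈ Icc a b := by
    rw [← setAverage_toReal_rnDeriv hμm]
    exact (convex_Icc a b).set_average_mem isClosed_Icc h0 (measure_ne_top m A)
      (ae_restrict_of_forall_mem hA hg) Measure.integrable_toReal_rnDeriv.integrableOn
  calc ∫⁻ x in A, ENNReal.ofReal (klFun (μ.rnDeriv m x).toReal) ∂m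
      ≤ ∫⁻ _ in A, ENNReal.ofReal (klFun (μ.real A / m.real A) + ε) ∂m :=
        setLIntegral_mono measurable_const fun x hx =>
          ENNReal.ofReal_le_ofReal (hosc _ (hg x hx) _ havg)
    _ = ENNReal.ofReal (m.real A * (klFun (μ.real A / m.real A) + ε)) := by
        rw [setLIntegral_const, ENNReal.ofReal_mul measureReal_nonneg, ofReal_measureReal,
          mul_comm]

lemma setLIntegral_klFun_le_of_partitionEntropy_le (hμm : μ ≪ m) {c : ℝ}
    (hpart : ∀ (s : Finset ℤ) (A : ℤ → Set X), (∀ i, MeasurableSet (A i)) →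
      Pairwise (Disjoint on A) → partitionEntropy μ m s A ≤ c)
    {R ε : ℝ} (hR : 0 < R) (hε : 0 < ε) :
    ∫⁻ x in {x | (μ.rnDeriv m x).toReal < R}, ENNReal.ofReal (klFun (μ.rnDeriv m x).toReal) ∂m
      ≤ ENNReal.ofReal (c + ε * m.real univ) := by
  set g : X → ℝ := fun x => (μ.rnDeriv m x).toReal
  obtain ⟨n, hn0, hosc⟩ :=
    exists_nat_forall_le_add_of_continuousOn continuous_klFun.continuousOn hR hε
  set η := R / n
  have hη : 0 < η := div_pos hR (by exact_mod_cast hn0)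
  have hnη : n * η = R := mul_div_cancel₀ R (by positivity)
  set E := levelSet g η
  have hE : ∀ k, MeasurableSet (E k) := measurableSet_levelSet (by fun_prop) η
  have hEd : Pairwise (Disjoint on E) := pairwise_disjoint_levelSet g η
  set s := Finset.Ico (0 : ℤ) n
  have hsub : {x | g x < R} ⊆ ⋃ k ∈ s, E k := fun x hx => by
    refine mem_biUnion (Finset.mem_Ico.2 ⟨?_, ?_⟩) (x := ⌊g x / η⌋) rfl
    · exact Int.floor_nonneg.2 (div_nonneg ENNReal.toReal_nonneg hη.le)
    · rw [Int.floor_lt, div_lt_iff₀ hη]; exact_mod_cast hnη ▸ hx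
  calc ∫⁻ x in {x | g x < R}, ENNReal.ofReal (klFun (g x)) ∂m
      ≤ ∫⁻ x in ⋃ k ∈ s, E k, ENNReal.ofReal (klFun (g x)) ∂m := lintegral_mono_set hsub
    _ = ∑ k ∈ s, ∫⁻ x in E k, ENNReal.ofReal (klFun (g x)) ∂m :=
        lintegral_biUnion_finset (hEd.set_pairwise _) (fun k _ => hE k) _
    _ ≤ ∑ k ∈ s, ENNReal.ofReal (m.real (E k) * (klFun (μ.real (E k) / m.real (E k)) + ε)) :=
        Finset.sum_le_sum fun k hk =>
          setLIntegral_klFun_le_of_forall_mem_Icc hμm (hE k)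
            (fun x hx => mem_Icc_of_mem_levelSet hη hx)
            (hosc k (Finset.mem_Ico.1 hk).1 (Finset.mem_Ico.1 hk).2)
    _ = ENNReal.ofReal (partitionEntropy μ m s E + ε * m.real (⋃ k ∈ s, E k)) := by
        rw [← ENNReal.ofReal_sum_of_nonneg fun k _ => mul_nonneg measureReal_nonneg
          (add_nonneg (klFun_nonneg (by positivity)) hε.le), partitionEntropy,
          measureReal_biUnion_finset (hEd.set_pairwise _) (fun k _ => hE k), Finset.mul_sum,
          ← Finset.sum_add_distrib]
        simp_rw [mul_add, mul_comm ε]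
    _ ≤ ENNReal.ofReal (c + ε * m.real univ) := by
        gcongr
        · exact hpart s E hE hEd
        · finiteness
        · exact subset_univ _

lemma klDiv_le_of_partitionEntropy_le (hμm : μ ≪ m) {c : ℝ}
    (hpart : ∀ (s : Finset ℤ) (A : ℤ → Set X), (∀ i, MeasurableSet (A i)) →
      Pairwise (Disjoint on A) → partitionEntropy μ m s A ≤ c) :
    klDiv μ m ≤ ENNReal.ofReal c := by
  have hcover : (⋃ N : ℕ, {x | (μ.rnDeriv m x).toReal < N + 1}) = univ :=
    eq_univ_of_forall fun x => mem_iUnion.2 <|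
      (exists_nat_gt (μ.rnDeriv m x).toReal).imp fun N hN => by
        change (μ.rnDeriv m x).toReal < N + 1; linarith
  have hmono : Monotone fun N : ℕ => {x | (μ.rnDeriv m x).toReal < N + 1} :=
    fun N N' h x (hx : (μ.rnDeriv m x).toReal < N + 1) =>
      show (μ.rnDeriv m x).toReal < N' + 1 by linarith [(Nat.cast_le (α := ℝ)).2 h]
  have hlim : Tendsto (fun ε : ℝ => ENNReal.ofReal (c + ε * m.real univ)) (𝓝[>] 0)
      (𝓝 (ENNReal.ofReal c)) := by
    refine tendsto_nhdsWithin_of_tendsto_nhds ?_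
    have : Continuous fun ε : ℝ => ENNReal.ofReal (c + ε * m.real univ) :=
      ENNReal.continuous_ofReal.comp (by fun_prop)
    simpa using this.tendsto 0
  rw [klDiv_eq_lintegral_klFun_of_ac hμm, ← setLIntegral_univ, ← hcover,
    setLIntegral_iUnion_of_directed _ hmono.directed_le]
  refine iSup_le fun N => ge_of_tendsto hlim (eventually_nhdsWithin_of_forall fun ε hε =>
    setLIntegral_klFun_le_of_partitionEntropy_le hμm hpart (by positivity) hε)

end Density

theorem klDiv_le_of_tendsto_measure {α : Type*} {F : Filter α} [F.NeBot] {ν : α → Measure X}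
    [∀ a, IsFiniteMeasure (ν a)] {μ m : Measure X} [IsFiniteMeasure μ] [IsFiniteMeasure m]
    (h : ∀ A, MeasurableSet A → Tendsto (fun a => ν a A) F (𝓝 (μ A))) {c : ℝ≥0∞} (hc : c ≠ ∞)
    (hν : ∀ᶠ a in F, klDiv (ν a) m ≤ c) :
    klDiv μ m ≤ c := by
  have hνm : ∀ᶠ a in F, ν a ≪ m := hν.mono fun a => absolutelyContinuous_of_klDiv_le hc
  have hμm : μ ≪ m := Measure.AbsolutelyContinuous.mk fun A hA hmA =>
    tendsto_nhds_unique (h A hA) (tendsto_const_nhds.congr' (hνm.mono fun a ha => (ha hmA).symm))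
  rw [← ENNReal.ofReal_toReal hc]
  refine klDiv_le_of_partitionEntropy_le hμm fun s A hA hd => le_of_tendsto
    (tendsto_partitionEntropy fun i _ =>
      (ENNReal.tendsto_toReal (measure_ne_top μ _)).comp (h _ (hA i))) ?_
  filter_upwards [hν, hνm] with a ha ham
  exact (partitionEntropy_le_toReal_klDiv ham (ne_top_of_le_ne_top hc ha) (fun i _ => hA i)
    (hd.set_pairwise _)).trans (ENNReal.toReal_mono hc ha)

lemma abs_integral_sub_sum_levelSet_le (ρ : Measure X) [IsFiniteMeasure ρ] {f : X → ℝ}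
    (hf : Measurable f) {B : ℝ} (hB : ∀ x, |f x| ≤ B) {η : ℝ} (hη : 0 < η) :
    |∫ x, f x ∂ρ - ∑ k ∈ Finset.Icc ⌊-B / η⌋ ⌊B / η⌋, k * η * ρ.real (levelSet f η k)|
      ≤ η * ρ.real univ := by
  set s := Finset.Icc ⌊-B / η⌋ ⌊B / η⌋
  have hE := measurableSet_levelSet hf η
  have hd := (pairwise_disjoint_levelSet f η).set_pairwise (s : Set ℤ)
  have hint : Integrable f ρ := .of_bound hf.aestronglyMeasurable B (ae_of_all _ hB)
  rw [← setIntegral_univ, ← iUnion_levelSet_of_abs_le hB hη,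
    integral_biUnion_finset s (fun k _ => hE k) hd fun k _ => hint.integrableOn,
    measureReal_biUnion_finset hd fun k _ => hE k, Finset.mul_sum, ← Finset.sum_sub_distrib]
  refine (Finset.abs_sum_le_sum_abs _ _).trans (Finset.sum_le_sum fun k _ => ?_)
  rw [mul_comm _ (ρ.real _), ← smul_eq_mul, ← setIntegral_const ((k : ℝ) * η),
    ← integral_sub hint.integrableOn (integrable_const ((k : ℝ) * η)).integrableOn,
    ← Real.norm_eq_abs]
  refine norm_setIntegral_le_of_norm_le_const (measure_lt_top ρ _) fun x hx => ?_
  obtain ⟨h1, h2⟩ := mem_Icc_of_mem_levelSet hη hx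
  rw [Real.norm_eq_abs, abs_le]
  constructor <;> linarith

theorem tendsto_finiteMeasure_of_forall_tendsto_measure [TopologicalSpace X]
    [OpensMeasurableSpace X] {α : Type*} {F : Filter α} {ν : α → FiniteMeasure X}
    {μ : FiniteMeasure X}
    (h : ∀ A, MeasurableSet A → Tendsto (fun a => (ν a : Measure X) A) F (𝓝 ((μ : Measure X) A))) :
    Tendsto ν F (𝓝 μ) := by
  have hreal : ∀ A, MeasurableSet A →
      Tendsto (fun a => (ν a : Measure X).real A) F (𝓝 ((μ : Measure X).real A)) :=
    fun A hA => (ENNReal.tendsto_toReal (measure_ne_top _ A)).comp (h A hA)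
  have hmass : ∀ᶠ a in F, (ν a : Measure X).real univ ≤ (μ : Measure X).real univ + 1 :=
    ((hreal univ .univ).eventually_lt_const (lt_add_one _)).mono fun _ => le_of_lt
  refine FiniteMeasure.tendsto_iff_forall_integral_tendsto.2 fun f => ?_
  have hf : Measurable f := f.continuous.measurable
  have hB : ∀ x, |f x| ≤ ‖f‖ := fun x => (Real.norm_eq_abs _).symm.trans_le (f.norm_coe_le_norm x)
  refine tendsto_of_forall_approx fun ε hε => ?_
  set M := (μ : Measure X).real univ + 1
  have hM : 0 < M := by positivity
  set η := ε / M
  have hη : 0 < η := div_pos hε hM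
  have hηM : η * M = ε := div_mul_cancel₀ ε hM.ne'
  set s := Finset.Icc ⌊-‖f‖ / η⌋ ⌊‖f‖ / η⌋
  refine ⟨fun a => ∑ k ∈ s, k * η * (ν a : Measure X).real (levelSet f η k),
    ∑ k ∈ s, k * η * (μ : Measure X).real (levelSet f η k),
    tendsto_finsetSum _ fun k _ => (hreal _ (measurableSet_levelSet hf η k)).const_mul _,
    hmass.mono fun a ha => ?_, ?_⟩
  · calc _ ≤ η * (ν a : Measure X).real univ := abs_integral_sub_sum_levelSet_le _ hf hB hη
      _ ≤ η * M := by gcongr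
      _ = ε := hηM
  · calc _ ≤ η * (μ : Measure X).real univ := abs_integral_sub_sum_levelSet_le _ hf hB hη
      _ ≤ η * M := by gcongr; linarith
      _ = ε := hηM

end

theorem isCompact_relEnt_sublevel_general {X : Type*} [MeasurableSpace X] [TopologicalSpace X]
    [BorelSpace X]
    (m : Measure X) [IsFiniteMeasure m] (C : ℝ) :
    IsCompact {ν : FiniteMeasure X | relEnt ν.toMeasure m ≤ ENNReal.ofReal C} := by
  simp_rw [relEnt_eq_klDiv]
  refine isCompact_iff_ultrafilter_le_nhds.2 fun F hF => ?_
  have hS : ∀ᶠ ν : FiniteMeasure X in F, klDiv ν m ≤ ENNReal.ofReal C := le_principal_iff.1 hF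
  obtain ⟨μ, hμ, hlim⟩ := exists_measure_tendsto_of_uniformly_absolutelyContinuous F
    (fun ν => (ν : Measure X)) m
    (by finiteness : ENNReal.ofReal (Real.exp 2) * m univ + ENNReal.ofReal C ≠ ∞)
    (hS.mono fun ν => measure_univ_le_of_klDiv_le ENNReal.ofReal_ne_top) fun ε hε =>
      (exists_pos_forall_measure_le_of_klDiv_le m ENNReal.ofReal_ne_top hε).imp
        fun δ ⟨hδ, h⟩ => ⟨hδ, fun A hA => hS.mono fun ν hν => h ν hν A hA⟩
  exact ⟨⟨μ, hμ⟩, klDiv_le_of_tendsto_measure hlim ENNReal.ofReal_ne_top hS,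
    tendsto_finiteMeasure_of_forall_tendsto_measure hlim⟩

/-- For a finite measure `m` on a Polish space, the sublevel sets
`{ν : H(ν | m) ≤ C}` of the relative entropy are compact in the topology of weak
convergence on the space of finite measures. -/
theorem isCompact_relEnt_sublevel {X : Type*} [MeasurableSpace X] [TopologicalSpace X]
    [PolishSpace X] [BorelSpace X]
    (m : Measure X) [IsFiniteMeasure m] (C : ℝ) :
    IsCompact {ν : FiniteMeasure X | relEnt ν.toMeasure m ≤ ENNReal.ofReal C} :=
  isCompact_relEnt_sublevel_general m C
end
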